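/- Let R = Q[x,y,z,w,t]/(x⁴, y⁴, w⁴, z⁴, x²y², y²w², z²w², xt, zt, wt, x²+y²+z²+w²). There is no pair of elements (k₁, l₁) with k₁ ∈ R of degree 0 (a rational scalar) and l₁ ∈ R of degree 1 satisfying k₁·y·t + y·l₁ = t² in R. -/

import Mathlib

open MvPolynomial

/-- The ideal
`(x⁴, y⁴, w⁴, z⁴, x²y², y²w², z²w², xt, zt, wt, x² + y² + z² + w²)` of `ℚ[x,y,z,w,t]`,
with variables `x=X 0, y=X 1, z=X 2, w=X 3, t=X 4`. -/
noncomputable def WindleIdealR : Ideal (MvPolynomial (Fin 5) ℚ) :=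
  Ideal.span {X 0 ^ 4, X 1 ^ 4, X 3 ^ 4, X 2 ^ 4, X 0 ^ 2 * X 1 ^ 2,
    X 1 ^ 2 * X 3 ^ 2, X 2 ^ 2 * X 3 ^ 2, X 0 * X 4, X 2 * X 4, X 3 * X 4,
    X 0 ^ 2 + X 1 ^ 2 + X 2 ^ 2 + X 3 ^ 2}

/-- `R = ℚ[x,y,z,w,t]/(x⁴, y⁴, w⁴, z⁴, x²y², y²w², z²w², xt, zt, wt, x²+y²+z²+w²)`. -/
noncomputable abbrev WindleQuotR : Type :=
  MvPolynomial (Fin 5) ℚ ⧸ WindleIdealR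

/-! Evaluating at `x = y = z = w = 0`, `t = 1` kills every generator of the ideal, hence factors
through `R`; it sends the left-hand side, a multiple of `y`, to `0` but `t²` to `1`. -/

lemma windleIdealR_le_ker_eval_single_four :
    WindleIdealR ≤ RingHom.ker (eval (Pi.single 4 1 : Fin 5 → ℚ)) := by
  rw [WindleIdealR, Ideal.span_le]
  intro q hq
  simp only [Set.mem_insert_iff, Set.mem_singleton_iff] at hq
  rcases hq with rfl | rfl | rfl | rfl | rfl | rfl | rfl | rfl | rfl | rfl | rfl <;> simp

/-- In `R = ℚ[x,y,z,w,t]/(x⁴, y⁴, w⁴, z⁴, x²y², y²w², z²w², xt, zt, wt, x²+y²+z²+w²)`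
there is no scalar `k₁ ∈ ℚ` and degree-one element `l₁ = c₁x + c₂y + c₃z + c₄w + c₅t`
with `k₁·y·t + y·l₁ = t²`. -/
theorem windle_no_homotopy :
    ¬ ∃ (k : ℚ) (c : Fin 5 → ℚ),
      Ideal.Quotient.mk WindleIdealR
          (C k * (X 1 * X 4) + X 1 * (∑ i : Fin 5, C (c i) * X i)) =
        Ideal.Quotient.mk WindleIdealR (X 4 ^ 2) := by
  rintro ⟨k, c, h⟩
  have h_ker := windleIdealR_le_ker_eval_single_four (Ideal.Quotient.eq.mp h)
  simp at h_ker
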